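/- Let δ ∈ (0,1), ε ∈ (0,1], u > 0 and n ≥ 1. Let X₁, …, Xₙ be i.i.d. real-valued random variables with mean μ = E[X₁] and raw moment bound E[|X₁|^{1+ε}] ≤ u. Define the truncated empirical mean μ̂_T = (1/n) ∑_{t=1}^n X_t · 𝟙{ |X_t| ≤ (u t / log(1/δ))^{1/(1+ε)} }. Then with probability at least 1 − δ, μ̂_T ≤ μ + 4 u^{1/(1+ε)} (log(1/δ) / n)^{ε/(1+ε)}. -/

import Mathlib

open MeasureTheory ProbabilityTheory Real Finset

/-!
Chernoff's method for the truncated variables `Y_t = X_t 𝟙{|X_t| ≤ B_t}`, where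
`B_t = (u t / L)^{1/(1+ε)}` and `L = log (1/δ)`, with parameter `λ = 1 / B_n`. Since `λ |Y_t| ≤ 1`,
`exp x ≤ 1 + x + x²` gives `E exp (λ Y_t) ≤ exp (λ E Y_t + λ² E Y_t²)`, and the moment bound gives
`E Y_t ≤ μ + u / B_t^ε` and `E Y_t² ≤ u B_t^{1-ε}`. With `r_t = λ B_t = (t/n)^{1/(1+ε)}` the two
error terms are `L r_t / t` and `L r_t² / t`, which sum over `t ≤ n` to at most `2L` and `L`.
Hence `E exp (λ ∑ Y_t) ≤ exp (λ n μ + 3L)`, while `λ n` times the deviation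
`4 u^{1/(1+ε)} (L/n)^{ε/(1+ε)}` is exactly `4L`, leaving the tail `e^{-L} = δ`.
-/

/-- Bernoulli's inequality `(1 - 1/m)^q ≤ 1 - q/m`, rescaled. -/
lemma mul_rpow_sub_one_le_rpow_sub_rpow {q : ℝ} (hq0 : 0 ≤ q) (hq1 : q ≤ 1) {m : ℝ}
    (hm : 1 ≤ m) : q * m ^ (q - 1) ≤ m ^ q - (m - 1) ^ q := by
  have hm0 : 0 < m := by linarith
  have hbern := rpow_one_add_le_one_add_mul_self (s := -m⁻¹) (by
    rw [neg_le_neg_iff]; exact inv_le_one_of_one_le₀ hm) hq0 hq1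
  have hbase : 1 + -m⁻¹ = (m - 1) / m := by field_simp; ring
  rw [hbase, div_rpow (by linarith) hm0.le, div_le_iff₀ (by positivity)] at hbern
  rw [rpow_sub_one hm0.ne']
  have : (1 + q * -m⁻¹) * m ^ q = m ^ q - q * (m ^ q / m) := by field_simp; ring
  linarith

lemma sum_range_rpow_sub_one_le {q : ℝ} (hq0 : 0 < q) (hq1 : q ≤ 1) (n : ℕ) :
    ∑ i ∈ range n, ((i : ℝ) + 1) ^ (q - 1) ≤ (n : ℝ) ^ q / q := by
  induction n with
  | zero => simp [zero_rpow hq0.ne']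
  | succ n ih =>
    have key := mul_rpow_sub_one_le_rpow_sub_rpow hq0.le hq1 (m := (n : ℝ) + 1) (by simp)
    rw [add_sub_cancel_right] at key
    rw [sum_range_succ, Nat.cast_succ, le_div_iff₀ hq0]
    rw [le_div_iff₀ hq0] at ih
    linarith

lemma sum_range_div_rpow_div_le {q : ℝ} (hq0 : 0 < q) (hq1 : q ≤ 1) (n : ℕ) :
    ∑ i ∈ range n, (((i : ℝ) + 1) / n) ^ q / ((i : ℝ) + 1) ≤ 1 / q := by
  rcases n.eq_zero_or_pos with rfl | hn
  · simp [hq0.le]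
  have hn0 : (0 : ℝ) < n := by exact_mod_cast hn
  calc ∑ i ∈ range n, (((i : ℝ) + 1) / n) ^ q / ((i : ℝ) + 1)
      = (∑ i ∈ range n, ((i : ℝ) + 1) ^ (q - 1)) / (n : ℝ) ^ q := by
        rw [sum_div]
        refine sum_congr rfl fun i _ => ?_
        rw [div_rpow (by positivity) hn0.le, rpow_sub_one (by positivity)]
        ring
    _ ≤ ((n : ℝ) ^ q / q) / (n : ℝ) ^ q := by
        gcongr; exact sum_range_rpow_sub_one_le hq0 hq1 n
    _ = 1 / q := by field_simp

lemma sum_range_div_rpow_div_le_one {p : ℝ} (hp : 1 ≤ p) (n : ℕ) :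
    ∑ i ∈ range n, (((i : ℝ) + 1) / n) ^ p / ((i : ℝ) + 1) ≤ 1 := by
  calc ∑ i ∈ range n, (((i : ℝ) + 1) / n) ^ p / ((i : ℝ) + 1)
      ≤ ∑ _i ∈ range n, (1 / n : ℝ) := by
        refine sum_le_sum fun i hi => ?_
        have hin' := mem_range.mp hi
        have hn0 : (0 : ℝ) < n := by exact_mod_cast i.zero_le.trans_lt hin'
        have hin : ((i : ℝ) + 1) / n ≤ 1 := by
          rw [div_le_one hn0]; exact_mod_cast hin'
        calc (((i : ℝ) + 1) / n) ^ p / ((i : ℝ) + 1)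
            ≤ (((i : ℝ) + 1) / n) ^ (1 : ℝ) / ((i : ℝ) + 1) := by
              gcongr ?_ / _; exact rpow_le_rpow_of_exponent_ge (by positivity) hin hp
          _ = 1 / n := by rw [rpow_one]; field_simp
    _ ≤ 1 := by
        rw [sum_const, card_range, nsmul_eq_mul, mul_one_div]
        exact div_self_le_one _

noncomputable def truncate (B x : ℝ) : ℝ := if |x| ≤ B then x else 0

section Truncate

variable {B ε : ℝ}

@[fun_prop]
lemma measurable_truncate (B : ℝ) : Measurable (truncate B) :=
  Measurable.ite (measurableSet_le measurable_abs measurable_const) measurable_id measurable_const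

lemma abs_truncate_le (hB : 0 ≤ B) (x : ℝ) : |truncate B x| ≤ B := by
  unfold truncate; split_ifs with h
  · exact h
  · simpa using hB

lemma abs_truncate_le_abs (B x : ℝ) : |truncate B x| ≤ |x| := by
  unfold truncate; split_ifs <;> simp

/-- Beyond the level `B`, `|x| ≤ |x| ^ (1 + ε) / B ^ ε` pays for what truncation removes. -/
lemma truncate_le_add_rpow_div (hB : 0 < B) (hε : 0 ≤ ε) (x : ℝ) :
    truncate B x ≤ x + |x| ^ (1 + ε) / B ^ ε := by
  unfold truncate; split_ifs with h
  · have : 0 ≤ |x| ^ (1 + ε) / B ^ ε := by positivity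
    linarith
  · have hx : 0 < |x| := hB.trans (not_le.mp h)
    have : |x| ≤ |x| ^ (1 + ε) / B ^ ε := by
      rw [rpow_add hx, rpow_one, mul_div_assoc, le_mul_iff_one_le_right hx,
        one_le_div (by positivity)]
      exact rpow_le_rpow hB.le (not_le.mp h).le hε
    linarith [neg_abs_le x]

lemma sq_truncate_le (hB : 0 ≤ B) (hε : ε ≤ 1) (x : ℝ) :
    truncate B x ^ 2 ≤ B ^ (1 - ε) * |x| ^ (1 + ε) := by
  unfold truncate; split_ifs with h
  · calc x ^ 2 = |x| ^ (1 - ε) * |x| ^ (1 + ε) := by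
          rw [← rpow_add' (abs_nonneg x) (by norm_num), show 1 - ε + (1 + ε) = 2 by ring,
            rpow_two, sq_abs]
      _ ≤ B ^ (1 - ε) * |x| ^ (1 + ε) := by
          gcongr
  · rw [zero_pow two_ne_zero]
    positivity

end Truncate

section Moments

variable {Ω : Type*} [MeasurableSpace Ω] {P : Measure Ω} {X : Ω → ℝ} {B ε : ℝ}

lemma integral_truncate_le (hX : Integrable X P)
    (hmom : Integrable (fun ω => |X ω| ^ (1 + ε)) P) (hB : 0 < B) (hε : 0 ≤ ε) :
    ∫ ω, truncate B (X ω) ∂P ≤ ∫ ω, X ω ∂P + (∫ ω, |X ω| ^ (1 + ε) ∂P) / B ^ ε := by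
  have htrunc : Integrable (fun ω => truncate B (X ω)) P :=
    hX.mono ((measurable_truncate B).comp_aemeasurable hX.aemeasurable).aestronglyMeasurable
      (.of_forall fun ω => abs_truncate_le_abs B (X ω))
  rw [← integral_div, ← integral_add hX (hmom.div_const _)]
  exact integral_mono htrunc (hX.add (hmom.div_const _))
    fun ω => truncate_le_add_rpow_div hB hε (X ω)

lemma integral_sq_truncate_le (hmom : Integrable (fun ω => |X ω| ^ (1 + ε)) P) (hB : 0 ≤ B)
    (hε : ε ≤ 1) :
    ∫ ω, truncate B (X ω) ^ 2 ∂P ≤ B ^ (1 - ε) * ∫ ω, |X ω| ^ (1 + ε) ∂P := by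
  rw [← integral_const_mul]
  exact integral_mono_of_nonneg (.of_forall fun ω => sq_nonneg _) (hmom.const_mul _)
    (.of_forall fun ω => sq_truncate_le hB hε (X ω))

lemma ProbabilityTheory.IdentDistrib.mul_integral_truncate_add_sq_le {X₀ : Ω → ℝ}
    (hX : IdentDistrib X X₀ P P) (hint : Integrable X₀ P)
    (hmom_int : Integrable (fun ω => |X₀ ω| ^ (1 + ε)) P) {u : ℝ}
    (hmom : ∫ ω, |X₀ ω| ^ (1 + ε) ∂P ≤ u) (hB : 0 < B) (hε0 : 0 ≤ ε) (hε1 : ε ≤ 1) {t : ℝ}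
    (ht : 0 ≤ t) :
    t * ∫ ω, truncate B (X ω) ∂P + t ^ 2 * ∫ ω, truncate B (X ω) ^ 2 ∂P ≤
      t * ∫ ω, X₀ ω ∂P + (t * (u / B ^ ε) + t ^ 2 * (u * B ^ (1 - ε))) := by
  have hmean : ∫ ω, truncate B (X ω) ∂P ≤ ∫ ω, X₀ ω ∂P + u / B ^ ε := calc
    _ = ∫ ω, truncate B (X₀ ω) ∂P := (hX.comp (measurable_truncate B)).integral_eq
    _ ≤ ∫ ω, X₀ ω ∂P + u / B ^ ε :=
      (integral_truncate_le hint hmom_int hB hε0).trans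
        (add_le_add_right (div_le_div_of_nonneg_right hmom (rpow_nonneg hB.le _)) _)
  have hsq : ∫ ω, truncate B (X ω) ^ 2 ∂P ≤ u * B ^ (1 - ε) := calc
    _ = ∫ ω, truncate B (X₀ ω) ^ 2 ∂P :=
      (hX.comp ((measurable_truncate B).pow_const 2)).integral_eq
    _ ≤ B ^ (1 - ε) * u := (integral_sq_truncate_le hmom_int hB.le hε1).trans
      (mul_le_mul_of_nonneg_left hmom (rpow_nonneg hB.le _))
    _ = u * B ^ (1 - ε) := mul_comm _ _
  have := mul_le_mul_of_nonneg_left hmean ht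
  have := mul_le_mul_of_nonneg_left hsq (sq_nonneg t)
  linarith

end Moments

section Chernoff

variable {Ω : Type*} [MeasurableSpace Ω] {P : Measure Ω} [IsProbabilityMeasure P]

/-- The quadratic bound `exp x ≤ 1 + x + x ^ 2` on `[-1, 1]`, integrated. -/
lemma mgf_le_exp_of_abs_le {Y : Ω → ℝ} (hY : AEMeasurable Y P) {B t : ℝ}
    (hbound : ∀ ω, |Y ω| ≤ B) (htB : |t| * B ≤ 1) :
    mgf Y P t ≤ exp (t * ∫ ω, Y ω ∂P + t ^ 2 * ∫ ω, Y ω ^ 2 ∂P) := by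
  have hint : Integrable Y P := .of_bound hY.aestronglyMeasurable B (.of_forall hbound)
  have hint_sq : Integrable (fun ω => Y ω ^ 2) P :=
    .of_bound (hY.pow_const 2).aestronglyMeasurable (B ^ 2) (.of_forall fun ω => by
      rw [Real.norm_eq_abs, abs_pow]; exact pow_le_pow_left₀ (abs_nonneg _) (hbound ω) 2)
  have hquad : ∀ ω, exp (t * Y ω) ≤ 1 + t * Y ω + t ^ 2 * Y ω ^ 2 := fun ω => by
    have hsmall : |t * Y ω| ≤ 1 := by
      rw [abs_mul]; exact (mul_le_mul_of_nonneg_left (hbound ω) (abs_nonneg t)).trans htB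
    have := (abs_le.mp (abs_exp_sub_one_sub_id_le hsmall)).2
    linarith [mul_pow t (Y ω) 2]
  have hint_lin : Integrable (fun ω => 1 + t * Y ω) P := (integrable_const 1).add (hint.const_mul t)
  calc mgf Y P t ≤ ∫ ω, (1 + t * Y ω + t ^ 2 * Y ω ^ 2) ∂P :=
        integral_mono_of_nonneg (.of_forall fun ω => (exp_pos _).le)
          (hint_lin.add (hint_sq.const_mul _)) (.of_forall hquad)
    _ = 1 + (t * ∫ ω, Y ω ∂P + t ^ 2 * ∫ ω, Y ω ^ 2 ∂P) := by
        rw [integral_add hint_lin (hint_sq.const_mul _),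
          integral_add (integrable_const 1) (hint.const_mul t), integral_const_mul,
          integral_const_mul, integral_const, probReal_univ, one_smul, add_assoc]
    _ ≤ exp (t * ∫ ω, Y ω ∂P + t ^ 2 * ∫ ω, Y ω ^ 2 ∂P) := by
        linarith [add_one_le_exp (t * ∫ ω, Y ω ∂P + t ^ 2 * ∫ ω, Y ω ^ 2 ∂P)]

lemma ProbabilityTheory.iIndepFun.measureReal_sum_ge_le_exp {ι : Type*} [Fintype ι]
    {Y : ι → Ω → ℝ} (hindep : iIndepFun Y P) (hY : ∀ i, AEMeasurable (Y i) P) {B : ι → ℝ}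
    (hbound : ∀ i ω, |Y i ω| ≤ B i) {t : ℝ} (ht : 0 ≤ t) (htB : ∀ i, t * B i ≤ 1) (c : ℝ) :
    P.real {ω | c ≤ ∑ i, Y i ω} ≤
      exp (-t * c + ∑ i, (t * ∫ ω, Y i ω ∂P + t ^ 2 * ∫ ω, Y i ω ^ 2 ∂P)) := by
  have hsum : (fun ω => ∑ i, Y i ω) = ∑ i, Y i := by ext ω; simp
  have hexp_int : Integrable (fun ω => exp (t * ∑ i, Y i ω)) P :=
    .of_bound (by fun_prop) (exp (t * ∑ i, B i)) (.of_forall fun ω => by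
      rw [Real.norm_eq_abs, abs_of_pos (exp_pos _), exp_le_exp]
      exact mul_le_mul_of_nonneg_left
        (sum_le_sum fun i _ => (le_abs_self _).trans (hbound i ω)) ht)
  calc P.real {ω | c ≤ ∑ i, Y i ω}
      ≤ exp (-t * c) * mgf (fun ω => ∑ i, Y i ω) P t := measure_ge_le_exp_mul_mgf c ht hexp_int
    _ ≤ exp (-t * c) * ∏ i, exp (t * ∫ ω, Y i ω ∂P + t ^ 2 * ∫ ω, Y i ω ^ 2 ∂P) := by
        rw [hsum, hindep.mgf_sum₀ hY]
        gcongr with i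
        · exact fun i _ => mgf_nonneg
        · exact mgf_le_exp_of_abs_le (hY i) (hbound i) (by rw [abs_of_nonneg ht]; exact htB i)
    _ = exp (-t * c + ∑ i, (t * ∫ ω, Y i ω ∂P + t ^ 2 * ∫ ω, Y i ω ^ 2 ∂P)) := by
        rw [← exp_sum, ← exp_add]

end Chernoff

noncomputable def truncationLevel (ε u L s : ℝ) : ℝ := (u * s / L) ^ (1 / (1 + ε))

section TruncationLevel

variable {ε u L s : ℝ}

lemma truncationLevel_pos (hu : 0 < u) (hL : 0 < L) (hs : 0 < s) :
    0 < truncationLevel ε u L s := by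
  unfold truncationLevel; positivity

lemma truncationLevel_rpow (hε : 0 < ε) (hu : 0 < u) (hL : 0 < L) (hs : 0 < s) :
    truncationLevel ε u L s ^ (1 + ε) = u * s / L := by
  rw [truncationLevel, one_div, rpow_inv_rpow (by positivity) (by linarith)]

lemma truncationLevel_div (hu : 0 < u) (hL : 0 < L) (hs : 0 < s) {m : ℝ} (hm : 0 < m) :
    truncationLevel ε u L s / truncationLevel ε u L m = (s / m) ^ (1 / (1 + ε)) := by
  rw [truncationLevel, truncationLevel, ← div_rpow (by positivity) (by positivity)]
  congr 1; field_simp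

lemma inv_truncationLevel_mul_le_one (hε : 0 ≤ ε) (hu : 0 < u) (hL : 0 < L) (hs : 0 < s)
    {m : ℝ} (hsm : s ≤ m) : (truncationLevel ε u L m)⁻¹ * truncationLevel ε u L s ≤ 1 := by
  have hm : 0 < m := hs.trans_le hsm
  rw [inv_mul_eq_div, truncationLevel_div hu hL hs hm]
  exact rpow_le_one (by positivity) ((div_le_one hm).mpr hsm) (by positivity)

lemma mul_div_rpow_add_sq_mul_mul_rpow_eq {B t : ℝ} (hB : 0 < B) (hs : 0 < s)
    (hBε : B ^ (1 + ε) = u * s / L) (hL : 0 < L) :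
    t * (u / B ^ ε) + t ^ 2 * (u * B ^ (1 - ε)) = L * (t * B + (t * B) ^ 2) / s := by
  rw [rpow_add hB, rpow_one] at hBε
  have hu : u = B * B ^ ε * L / s := by rw [hBε]; field_simp
  rw [rpow_sub hB, rpow_one, hu]
  have : 0 < B ^ ε := by positivity
  field_simp

lemma sum_truncation_exponent_le (hε : 0 < ε) (hε1 : ε ≤ 1) (hu : 0 < u) (hL : 0 < L) (n : ℕ)
    (hn : 0 < n) :
    ∑ i ∈ range n,
      ((truncationLevel ε u L n)⁻¹ * (u / truncationLevel ε u L (i + 1) ^ ε) +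
        (truncationLevel ε u L n)⁻¹ ^ 2 * (u * truncationLevel ε u L (i + 1) ^ (1 - ε)))
      ≤ 3 * L := by
  have hn0 : (0 : ℝ) < n := by exact_mod_cast hn
  have hq0 : 0 < 1 / (1 + ε) := by positivity
  have hq1 : 1 / (1 + ε) ≤ 1 := by rw [div_le_one (by linarith)]; linarith
  have h2q : 1 ≤ 2 * (1 / (1 + ε)) := by rw [← mul_div_assoc, le_div_iff₀ (by linarith)]; linarith
  have hterm : ∀ i ∈ range n,
      (truncationLevel ε u L n)⁻¹ * (u / truncationLevel ε u L (i + 1) ^ ε) +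
        (truncationLevel ε u L n)⁻¹ ^ 2 * (u * truncationLevel ε u L (i + 1) ^ (1 - ε))
      = L * ((((i : ℝ) + 1) / n) ^ (1 / (1 + ε)) / ((i : ℝ) + 1)) +
        L * ((((i : ℝ) + 1) / n) ^ (2 * (1 / (1 + ε))) / ((i : ℝ) + 1)) := fun i _ => by
    rw [mul_div_rpow_add_sq_mul_mul_rpow_eq (truncationLevel_pos hu hL (by positivity))
      (by positivity) (truncationLevel_rpow hε hu hL (by positivity)) hL,
      inv_mul_eq_div, truncationLevel_div hu hL (by positivity) hn0, mul_comm 2,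
      rpow_mul (by positivity), rpow_two]
    ring
  rw [sum_congr rfl hterm, sum_add_distrib, ← mul_sum, ← mul_sum]
  have h1 := sum_range_div_rpow_div_le hq0 hq1 n
  have h2 := sum_range_div_rpow_div_le_one h2q n
  have h3 : 1 / (1 / (1 + ε)) ≤ 2 := by rw [one_div_one_div]; linarith
  nlinarith

lemma mul_mul_rpow_div_truncationLevel (hε : 0 < ε) (hu : 0 < u) (hL : 0 < L) {m : ℝ}
    (hm : 0 < m) :
    m * (u ^ (1 / (1 + ε)) * (L / m) ^ (ε / (1 + ε))) / truncationLevel ε u L m = L := by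
  have hLm : 0 < L / m := by positivity
  have hexp : ε / (1 + ε) = 1 - 1 / (1 + ε) := by field_simp; ring
  rw [truncationLevel, hexp, rpow_sub hLm, rpow_one, show u * m / L = u / (L / m) by field_simp,
    div_rpow hu.le hLm.le]
  field_simp

end TruncationLevel

lemma ofReal_one_sub_le_measure_of_compl_subset {Ω : Type*} [MeasurableSpace Ω] {P : Measure Ω}
    [IsProbabilityMeasure P] {A S : Set Ω} {δ : ℝ} (hAS : Aᶜ ⊆ S) (hS : P.real S ≤ δ) :
    ENNReal.ofReal (1 - δ) ≤ P A := by
  have hδ : 0 ≤ δ := measureReal_nonneg.trans hS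
  have hcompl : P Aᶜ ≤ ENNReal.ofReal δ :=
    (measure_mono hAS).trans (by rw [← ofReal_measureReal]; exact ENNReal.ofReal_le_ofReal hS)
  have hunion : 1 ≤ P A + ENNReal.ofReal δ :=
    (measure_univ (μ := P)).symm.le.trans
      ((measure_univ_le_add_compl A).trans (add_le_add_right hcompl _))
  rw [ENNReal.ofReal_sub _ hδ, ENNReal.ofReal_one]
  exact tsub_le_iff_right.mpr hunion

theorem truncated_mean_concentration_general {Ω : Type*} [MeasurableSpace Ω] (P : Measure Ω)
    [IsProbabilityMeasure P]
    (δ ε u μ : ℝ) (hδ : δ ∈ Set.Ioo (0 : ℝ) 1) (hε : ε ∈ Set.Ioc (0 : ℝ) 1) (hu : 0 < u)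
    (n : ℕ) (hn : 1 ≤ n) (X : Fin n → Ω → ℝ)
    (hindep : iIndepFun X P)
    (hident : ∀ i, IdentDistrib (X i) (X ⟨0, hn⟩) P P)
    (hint : Integrable (X ⟨0, hn⟩) P)
    (hmean : ∫ ω, X ⟨0, hn⟩ ω ∂P = μ)
    (hmom_int : Integrable (fun ω => |X ⟨0, hn⟩ ω| ^ (1 + ε)) P)
    (hmom : ∫ ω, |X ⟨0, hn⟩ ω| ^ (1 + ε) ∂P ≤ u) :
    ENNReal.ofReal (1 - δ) ≤
      P {ω | (1 / n : ℝ) * ∑ i : Fin n,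
              (if |X i ω| ≤ (u * ((i : ℕ) + 1) / Real.log (1 / δ)) ^ (1 / (1 + ε))
                then X i ω else 0)
            ≤ μ + 4 * u ^ (1 / (1 + ε)) * (Real.log (1 / δ) / n) ^ (ε / (1 + ε))} := by
  obtain ⟨hδ0, hδ1⟩ := hδ
  obtain ⟨hε0, hε1⟩ := hε
  have hn0 : (0 : ℝ) < n := by exact_mod_cast hn
  set L := Real.log (1 / δ) with hL_def
  have hL : 0 < L := log_pos (by rw [one_div]; exact (one_lt_inv₀ hδ0).mpr hδ1)
  set B : Fin n → ℝ := fun i => truncationLevel ε u L ((i : ℕ) + 1)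
  have hB : ∀ i, 0 < B i := fun i => truncationLevel_pos hu hL (by positivity)
  set t := (truncationLevel ε u L n)⁻¹ with ht_def
  have ht : 0 ≤ t := (inv_pos.mpr (truncationLevel_pos hu hL hn0)).le
  set Y : Fin n → Ω → ℝ := fun i => truncate (B i) ∘ X i
  have hsum : ∑ i, (t * ∫ ω, Y i ω ∂P + t ^ 2 * ∫ ω, Y i ω ^ 2 ∂P) ≤ t * (n * μ) + 3 * L := by
    rw [← hmean]
    refine (sum_le_sum fun i _ =>
      (hident i).mul_integral_truncate_add_sq_le hint hmom_int hmom (hB i) hε0.le hε1 ht).trans ?_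
    rw [sum_add_distrib, sum_const, card_univ, Fintype.card_fin, nsmul_eq_mul, mul_left_comm]
    gcongr
    exact (Fin.sum_univ_eq_sum_range _ n).trans_le (sum_truncation_exponent_le hε0 hε1 hu hL n hn)
  set c := μ + 4 * u ^ (1 / (1 + ε)) * (L / n) ^ (ε / (1 + ε)) with hc_def
  have hthreshold : t * (n * c) = t * (n * μ) + 4 * L := by
    rw [hc_def, ht_def]
    linear_combination 4 * mul_mul_rpow_div_truncationLevel hε0 hu hL hn0
  have htail : P.real {ω | n * c ≤ ∑ i, Y i ω} ≤ δ := calc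
    _ ≤ exp (-t * (n * c) + ∑ i, (t * ∫ ω, Y i ω ∂P + t ^ 2 * ∫ ω, Y i ω ^ 2 ∂P)) :=
      iIndepFun.measureReal_sum_ge_le_exp (hindep.comp _ fun i => measurable_truncate (B i))
        (fun i => (measurable_truncate _).comp_aemeasurable (hident i).aemeasurable_fst)
        (fun i ω => abs_truncate_le (hB i).le _) ht
        (fun i => inv_truncationLevel_mul_le_one hε0.le hu hL (by positivity)
          (by exact_mod_cast i.isLt)) _
    _ ≤ exp (-L) := by gcongr; linarith
    _ = δ := by rw [exp_neg, hL_def, exp_log (by positivity), one_div, inv_inv]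
  change ENNReal.ofReal (1 - δ) ≤ P {ω | (1 / n : ℝ) * ∑ i, Y i ω ≤ c}
  refine ofReal_one_sub_le_measure_of_compl_subset (fun ω hω => ?_) htail
  simp only [Set.mem_compl_iff, Set.mem_ofPred_eq, not_le] at hω ⊢
  rw [one_div, inv_mul_eq_div, lt_div_iff₀ hn0] at hω
  linarith

/-- Concentration of the truncated empirical mean under a raw `(1+ε)`-moment bound
(Lemma 1 of Bubeck et al.): with probability at least `1 − δ`,
`μ̂_T ≤ μ + 4 u^{1/(1+ε)} (log(1/δ)/n)^{ε/(1+ε)}`. -/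
theorem truncated_mean_concentration {Ω : Type*} [MeasurableSpace Ω] (P : Measure Ω)
    [IsProbabilityMeasure P]
    (δ ε u μ : ℝ) (hδ : δ ∈ Set.Ioo (0 : ℝ) 1) (hε : ε ∈ Set.Ioc (0 : ℝ) 1) (hu : 0 < u)
    (n : ℕ) (hn : 1 ≤ n) (X : Fin n → Ω → ℝ)
    (hmeas : ∀ i, Measurable (X i))
    (hindep : iIndepFun X P)
    (hident : ∀ i, IdentDistrib (X i) (X ⟨0, hn⟩) P P)
    (hint : Integrable (X ⟨0, hn⟩) P)
    (hmean : ∫ ω, X ⟨0, hn⟩ ω ∂P = μ)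
    (hmom_int : Integrable (fun ω => |X ⟨0, hn⟩ ω| ^ (1 + ε)) P)
    (hmom : ∫ ω, |X ⟨0, hn⟩ ω| ^ (1 + ε) ∂P ≤ u) :
    ENNReal.ofReal (1 - δ) ≤
      P {ω | (1 / n : ℝ) * ∑ i : Fin n,
              (if |X i ω| ≤ (u * ((i : ℕ) + 1) / Real.log (1 / δ)) ^ (1 / (1 + ε))
                then X i ω else 0)
            ≤ μ + 4 * u ^ (1 / (1 + ε)) * (Real.log (1 / δ) / n) ^ (ε / (1 + ε))} :=
  truncated_mean_concentration_general P δ ε u μ hδ hε hu n hn X hindep hident hint hmean hmom_int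
    hmom
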